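/- arXiv:2604.15803 — 2 statements merged into one kernel-verified Lean document; each statement's English description precedes it below -/
import Mathlib

section
/- Let G be a group generated by a finite symmetric set S with word length ℓ_G, let π : G → Q be a surjective group homomorphism, and equip Q with the generating set π(S) and its word length ℓ_Q (so that ℓ_Q(π(g)) ≤ ℓ_G(g) for all g ∈ G). Let L ≤ Q and set H = π⁻¹(L). If the pair (Q,L) has pair rapid decay, then the pair (G,H) has pair rapid decay; and if (Q,L) ∈ SLC_subexp, then (G,H) ∈ SLC_subexp. -/
open scoped ENNReal
open Filter Topology

noncomputable section

namespace PaperRD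

variable {G : Type*} [Group G]

/-- The fiber summation (push-forward) `π_# f` of a real-valued function on `G`
along the projection `G → G ⧸ H` onto the space of left cosets. -/
def fiberSum (H : Subgroup G) (f : G → ℝ) (x : G ⧸ H) : ℝ :=
  ∑' g : {g : G // (QuotientGroup.mk g : G ⧸ H) = x}, f (g : G)

/-- The `ℓ^q`-norm (valued in `ℝ≥0∞`) of a function on a type. -/
def lqNorm {X : Type*} {E : Type*} [Norm E] (q : ℝ) (ξ : X → E) : ℝ≥0∞ :=
  (∑' x : X, ENNReal.ofReal ‖ξ x‖ ^ q) ^ (1 / q)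

/-- The quasi-regular convolution operator `λ_X(f)` acting on functions on `G ⧸ H`:
`(λ_X(f)ξ)(x) = ∑_{g ∈ G} f(g) ξ(g⁻¹ x)`. -/
def lam (H : Subgroup G) (f : G → ℂ) (ξ : G ⧸ H → ℂ) (x : G ⧸ H) : ℂ :=
  ∑' g : G, f g * ξ ((g⁻¹ : G) • x)

/-- Operator norm (in `ℝ≥0∞`) of a map on functions, with respect to the `ℓ^q` norms:
the supremum of `‖Tξ‖_q` over the unit ball. -/
def opNorm {X : Type*} (q : ℝ) (T : (X → ℂ) → (X → ℂ)) : ℝ≥0∞ :=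
  ⨆ ξ : {ξ : X → ℂ // lqNorm q ξ ≤ 1}, lqNorm q (T (ξ : X → ℂ))

/-- The spectral radius `r_q(μ) = lim_n ‖T_q^n‖^{1/n}`; since the sequence of norms is
submultiplicative the limit exists and equals `inf_n ‖T_q^n‖^{1/n}`, which we take as
the definition. -/
def specRad (H : Subgroup G) (μ : G → ℝ) (q : ℝ) : ℝ :=
  (⨅ n : ℕ, opNorm q ((lam H (fun g => (μ g : ℂ)))^[n + 1]) ^ (1 / (n + 1 : ℝ))).toReal

/-- `c(G,H;μ) = sup_{p ∈ [2,∞)} ( -p · log r_{p/(p-1)}(μ) )`. -/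
def cval (H : Subgroup G) (μ : G → ℝ) : ℝ :=
  sSup {y : ℝ | ∃ p : ℝ, 2 ≤ p ∧ y = -p * Real.log (specRad H μ (p / (p - 1)))}

/-- Convolution of real functions on `G`. -/
def conv (f φ : G → ℝ) (g : G) : ℝ :=
  ∑' y : G, f y * φ (y⁻¹ * g)

open scoped Classical in
/-- Convolution powers `μ^{*n}` (with `μ^{*0} = δ_e`). -/
def convPow (μ : G → ℝ) : ℕ → G → ℝ
  | 0 => fun g => if g = 1 then 1 else 0
  | n + 1 => conv μ (convPow μ n)

/-- `ν_n = π_#(μ^{*n}) = μ^{*n} * δ_{eH}`, the distribution at time `n` of the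
`μ`-random walk on `G ⧸ H` started at the base coset. -/
def walkDist (H : Subgroup G) (μ : G → ℝ) (n : ℕ) : G ⧸ H → ℝ :=
  fiberSum H (convPow μ n)

/-- Shannon entropy `H(ν) = -∑ ν log ν` (with the convention `0 log 0 = 0`,
automatic since `Real.log 0 = 0`). -/
def shannon {X : Type*} (ν : X → ℝ) : ℝ :=
  -∑' x : X, ν x * Real.log (ν x)

/-- Rényi entropy of order `α`: `H_α(ν) = (1/(1-α)) log ∑ ν(x)^α`. -/
def renyi {X : Type*} (α : ℝ) (ν : X → ℝ) : ℝ :=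
  (1 / (1 - α)) * Real.log (∑' x : X, ν x ^ α)

/-- Word length with respect to a generating set `S`. -/
def wordLength (S : Set G) (g : G) : ℕ :=
  sInf {n : ℕ | ∃ l : List G, (∀ s ∈ l, s ∈ S) ∧ l.length = n ∧ l.prod = g}

/-- The mixed `(2,1)`-norm of a function on `G` relative to the pair `(G,H)`:
`‖f‖_{(2,1)} = ( ∑_{x ∈ G/H} ( ∑_{g ∈ x} |f(g)| )² )^{1/2}`. -/
def norm21 (H : Subgroup G) (f : G → ℂ) : ℝ :=
  Real.sqrt (∑' x : G ⧸ H,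
    (∑' g : {g : G // (QuotientGroup.mk g : G ⧸ H) = x}, ‖f (g : G)‖) ^ 2)

/-- Convolution of complex functions on `G`. -/
def convC (f φ : G → ℂ) (g : G) : ℂ :=
  ∑' y : G, f y * φ (y⁻¹ * g)

/-- The Haagerup-type norm `‖f‖_h` for the pair `(G,H)`:
the supremum of `‖f ∗ φ‖_{(2,1)}` over finitely supported nonnegative `φ` with
`‖φ‖_{(2,1)} ≤ 1`. -/
def hNorm (H : Subgroup G) (f : G → ℂ) : ℝ :=
  sSup {r : ℝ | ∃ φ : G → ℝ, (Function.support φ).Finite ∧ (∀ y, 0 ≤ φ y) ∧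
    norm21 H (fun g => (φ g : ℂ)) ≤ 1 ∧
    r = norm21 H (convC f (fun g => (φ g : ℂ)))}

/-- The pair `(G,H)` has pair rapid decay w.r.t. the length `ℓ`, with exponent `s`. -/
def HasPairRDWith (H : Subgroup G) (ℓ : G → ℕ) (s : ℝ) : Prop :=
  ∃ C : ℝ, 0 < C ∧ ∀ f : G → ℂ, (Function.support f).Finite →
    hNorm H f ≤ C * norm21 H (fun g => f g * (((1 + (ℓ g : ℝ)) ^ s : ℝ) : ℂ))

/-- The pair `(G,H)` has pair rapid decay w.r.t. the length `ℓ`. -/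
def HasPairRD (H : Subgroup G) (ℓ : G → ℕ) : Prop :=
  ∃ s : ℝ, 0 < s ∧ HasPairRDWith H ℓ s

/-- Radial majorant `W(t) = sup { w(g) : ℓ(g) ≤ t }` of a weight `w`. -/
def radialMaj (ℓ : G → ℕ) (w : G → ℝ) (t : ℕ) : ℝ :=
  sSup (w '' {g : G | ℓ g ≤ t})

/-- The pair `(G,H)` satisfies subexponential Lorentz control (`SLC_subexp`)
w.r.t. the length `ℓ`: there is a weight `w ≥ 1` with `‖f‖_h ≤ C ‖f·w‖_{(2,1)}`
for all finitely supported `f`, whose radial majorant `W` satisfies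
`log W(t) / t → 0`. -/
def SLCsubexp (H : Subgroup G) (ℓ : G → ℕ) : Prop :=
  ∃ C : ℝ, 0 < C ∧ ∃ w : G → ℝ, (∀ g, 1 ≤ w g) ∧
    (∀ f : G → ℂ, (Function.support f).Finite →
      hNorm H f ≤ C * norm21 H (fun g => f g * (w g : ℂ))) ∧
    Tendsto (fun t : ℕ => Real.log (radialMaj ℓ w t) / (t : ℝ)) atTop (𝓝 0)

end PaperRD

/-!
Push everything forward along `π`. Since `G ⧸ π⁻¹L ≃ Q ⧸ L` fibrewise, the push-forward
`π_# u` of a finitely supported `u ≥ 0` has the same `(2,1)`-norm for `(Q, L)` as `u` has for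
`(G, π⁻¹L)`, and `π_#` intertwines convolution. Hence a competitor `φ` for `‖f‖_h` on `G` gives the
competitor `π_# φ` for `‖π_# |f|‖_h` on `Q`, so `‖f‖_h ≤ ‖π_# |f|‖_h ≤ C ‖π_# |f| · w‖_{(2,1)}`, and
the last norm is at most `‖f · w'‖_{(2,1)}` as soon as `w ∘ π ≤ w'`. For rapid decay this holds for
`w' = (1 + ℓ_G)^s` because `ℓ_Q ∘ π ≤ ℓ_G`; for `SLC_subexp` take `w' = w ∘ π`, whose radial
majorant is that of `w`, since the word-length balls of `Q` are the images of those of `G`.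
-/

namespace PaperRD

open Function
open scoped Classical Pointwise

section Push

variable {α β γ : Type*}

def push (p : α → β) (f : α → ℝ) (b : β) : ℝ :=
  ∑' a : {a // p a = b}, f a

lemma push_apply (p : α → β) (f : α → ℝ) (b : β) :
    push p f b = ∑' a, if p a = b then f a else 0 :=
  (tsum_subtype {a | p a = b} f).trans (tsum_congr fun a => by simp [Set.indicator])

lemma push_nonneg (p : α → β) {f : α → ℝ} (hf : ∀ a, 0 ≤ f a) (b : β) : 0 ≤ push p f b :=
  tsum_nonneg fun a => hf a

lemma support_push_subset (p : α → β) (f : α → ℝ) : support (push p f) ⊆ p '' support f := by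
  intro b hb
  by_contra h
  have hf : ∀ a : {a // p a = b}, f a = 0 := fun a => by_contra fun ha => h ⟨a, ha, a.2⟩
  simp [push, hf] at hb

lemma finite_support_push {p : α → β} {f : α → ℝ} (hf : (support f).Finite) :
    (support (push p f)).Finite :=
  (hf.image p).subset (support_push_subset p f)

lemma push_congr {p : α → β} {p' : α → γ} {b : β} {c : γ} (h : ∀ a, p a = b ↔ p' a = c)
    (f : α → ℝ) : push p f b = push p' f c := by
  simp only [push_apply, h]

lemma push_mul_comp (p : α → β) (f : α → ℝ) (h : β → ℝ) (b : β) :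
    push p (fun a => f a * h (p a)) b = push p f b * h b := by
  rw [push, push, ← tsum_mul_right]
  exact tsum_congr fun a => by rw [a.2]

lemma push_le_push {p : α → β} {f g : α → ℝ} (hfg : ∀ a, f a ≤ g a) (hf : (support f).Finite)
    (hg : (support g).Finite) (b : β) : push p f b ≤ push p g b :=
  Summable.tsum_le_tsum (fun a => hfg a) ((summable_of_hasFiniteSupport hf : Summable f).subtype _)
    ((summable_of_hasFiniteSupport hg : Summable g).subtype _)

lemma tsum_push (p : α → β) {f : α → ℝ} (hf : (support f).Finite) :
    ∑' b, push p f b = ∑' a, f a := by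
  have hsum : Summable f := summable_of_hasFiniteSupport hf
  rw [← (Equiv.sigmaFiberEquiv p).tsum_eq, Summable.tsum_sigma']
  · rfl
  · exact fun b => hsum.subtype _
  · exact (Equiv.summable_iff _).mpr hsum

lemma tsum_push_mul (p : α → β) {f : α → ℝ} (hf : (support f).Finite) (h : β → ℝ) :
    ∑' b, push p f b * h b = ∑' a, f a * h (p a) := by
  simp_rw [← push_mul_comp]
  exact tsum_push p (hf.subset (support_mul_subset_left _ _))

lemma push_comp (q : β → γ) (p : α → β) {f : α → ℝ} (hf : (support f).Finite) :
    push (q ∘ p) f = push q (push p f) := by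
  funext c
  have hfiber : ∀ b, push p (fun a => if q (p a) = c then f a else 0) b
      = if q b = c then push p f b else 0 := by
    intro b
    split_ifs with hb
    · exact tsum_congr fun a => by dsimp only; rw [a.2, if_pos hb]
    · exact (tsum_congr fun a => by dsimp only; rw [a.2, if_neg hb]).trans tsum_zero
  have hf' : (support fun a => if q (p a) = c then f a else 0).Finite :=
    hf.subset fun a ha h0 => ha (by simp [h0])
  rw [push_apply q, ← tsum_congr hfiber, tsum_push p hf', push_apply]
  rfl

end Push

section Convolution

variable {K X : Type*} [Group K]

lemma support_conv_subset (a φ : K → ℝ) : support (conv a φ) ⊆ support a * support φ := by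
  intro g hg
  obtain ⟨y, hy⟩ : ∃ y, a y * φ (y⁻¹ * g) ≠ 0 := by
    by_contra! h
    simp [conv, h] at hg
  exact ⟨y, left_ne_zero_of_mul hy, y⁻¹ * g, right_ne_zero_of_mul hy, mul_inv_cancel_left y g⟩

lemma finite_support_conv {a φ : K → ℝ} (ha : (support a).Finite) (hφ : (support φ).Finite) :
    (support (conv a φ)).Finite :=
  (ha.mul hφ).subset (support_conv_subset a φ)

lemma conv_nonneg {a φ : K → ℝ} (ha : ∀ g, 0 ≤ a g) (hφ : ∀ g, 0 ≤ φ g) (g : K) :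
    0 ≤ conv a φ g :=
  tsum_nonneg fun y => mul_nonneg (ha y) (hφ _)

lemma convC_ofReal (a φ : K → ℝ) :
    convC (fun g => (a g : ℂ)) (fun g => (φ g : ℂ)) = fun g => (conv a φ g : ℂ) := by
  funext g
  rw [convC, conv, Complex.ofReal_tsum]
  push_cast
  rfl

lemma norm_convC_le {f : K → ℂ} {φ : K → ℝ} (hf : (support f).Finite) (hφ : ∀ g, 0 ≤ φ g)
    (g : K) : ‖convC f (fun y => (φ y : ℂ)) g‖ ≤ conv (fun y => ‖f y‖) φ g := by
  have hsum : Summable fun y => f y * (φ (y⁻¹ * g) : ℂ) :=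
    summable_of_hasFiniteSupport (hf.subset (support_mul_subset_left _ _))
  refine (norm_tsum_le_tsum_norm hsum.norm).trans_eq (tsum_congr fun y => ?_)
  rw [norm_mul, Complex.norm_of_nonneg (hφ _)]

lemma push_conv_apply [MulAction K X] {p : K → X} (hp : ∀ y g, p (y * g) = y • p g)
    {a φ : K → ℝ} (ha : (support a).Finite) (hφ : (support φ).Finite) (x : X) :
    push p (conv a φ) x = ∑' y, a y * push p φ (y⁻¹ • x) := by
  have hsum : Summable (uncurry fun (g : {g // p g = x}) (y : K) => a y * φ (y⁻¹ * g)) := by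
    refine summable_of_hasFiniteSupport
      ((((ha.mul hφ).preimage Subtype.val_injective.injOn).prod ha).subset ?_)
    rintro ⟨g, y⟩ h
    refine ⟨⟨y, left_ne_zero_of_mul h, _, right_ne_zero_of_mul h, mul_inv_cancel_left y g⟩,
      left_ne_zero_of_mul h⟩
  have hfiber : ∀ y, ∑' g : {g // p g = x}, φ (y⁻¹ * g) = push p φ (y⁻¹ • x) := fun y =>
    (Equiv.subtypeEquiv (p := fun g => p g = x) (q := fun g => p g = y⁻¹ • x)
      (Equiv.mulLeft y⁻¹) fun g => by simp [hp]).tsum_eq fun g => φ g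
  simp only [push, conv]
  rw [← hsum.tsum_comm]
  exact tsum_congr fun y => by rw [tsum_mul_left, hfiber]; rfl

lemma push_conv {G Q : Type*} [Group G] [Group Q] (π : G →* Q) {a φ : G → ℝ}
    (ha : (support a).Finite) (hφ : (support φ).Finite) :
    push π (conv a φ) = conv (push π a) (push π φ) := by
  let _ : MulAction G Q := MulAction.compHom Q π
  funext q
  rw [push_conv_apply (fun y g => map_mul π y g) ha hφ, conv, tsum_push_mul π ha]
  simp [MulAction.compHom_smul_def]

end Convolution

lemma support_norm_comp {α E : Type*} [NormedAddCommGroup E] (f : α → E) :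
    support (fun a => ‖f a‖) = support f :=
  support_comp_eq norm norm_eq_zero f

lemma support_ofReal_comp {α : Type*} (u : α → ℝ) : support (fun a => (u a : ℂ)) = support u :=
  support_comp_eq _ Complex.ofReal_eq_zero u

lemma summable_sq_push {α β : Type*} (p : α → β) {u : α → ℝ} (hu : (support u).Finite) :
    Summable fun b => push p u b ^ 2 :=
  summable_of_hasFiniteSupport <| (finite_support_push hu).subset fun b hb => by simpa using hb

section MixedNorm

variable {K : Type*} [Group K] (N : Subgroup K)

lemma fiberSum_eq_push : fiberSum N = push QuotientGroup.mk :=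
  rfl

lemma norm21_eq (f : K → ℂ) : norm21 N f = √(∑' x, fiberSum N (fun g => ‖f g‖) x ^ 2) :=
  rfl

lemma norm21_ofReal {u : K → ℝ} (hu : ∀ g, 0 ≤ u g) :
    norm21 N (fun g => (u g : ℂ)) = √(∑' x, fiberSum N u x ^ 2) := by
  simp only [norm21_eq, Complex.norm_of_nonneg (hu _)]

lemma norm21_mono {f₁ f₂ : K → ℂ} (h : ∀ g, ‖f₁ g‖ ≤ ‖f₂ g‖) (h₂ : (support f₂).Finite) :
    norm21 N f₁ ≤ norm21 N f₂ := by
  have hs₂ : (support fun g => ‖f₂ g‖).Finite := by rwa [support_norm_comp]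
  have hs₁ : (support fun g => ‖f₁ g‖).Finite :=
    hs₂.subset fun g hg => ((norm_nonneg _).lt_of_ne' hg |>.trans_le (h g)).ne'
  rw [norm21_eq, norm21_eq, fiberSum_eq_push]
  refine Real.sqrt_le_sqrt (Summable.tsum_le_tsum (fun x => ?_) (summable_sq_push _ hs₁)
    (summable_sq_push _ hs₂))
  exact pow_le_pow_left₀ (push_nonneg _ (fun _ => norm_nonneg _) x) (push_le_push h hs₁ hs₂ x) 2

/-- The coset sums of `a ∗ ψ` are combinations of translates of those of `ψ` with weights `a`;
Cauchy–Schwarz and the translation invariance of the `ℓ²`-norm on `K ⧸ N` give the bound. -/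
lemma norm21_conv_le {a ψ : K → ℝ} (ha0 : ∀ g, 0 ≤ a g) (ha : (support a).Finite)
    (hψ0 : ∀ g, 0 ≤ ψ g) (hψ : (support ψ).Finite) :
    norm21 N (fun g => (conv a ψ g : ℂ)) ≤ (∑' g, a g) * norm21 N (fun g => (ψ g : ℂ)) := by
  set I := push (QuotientGroup.mk : K → K ⧸ N) ψ
  set A := ha.toFinset
  have haA : ∀ p ∉ A, a p = 0 := fun p hp => by simpa [A] using hp
  have hI : Summable fun x => I x ^ 2 := summable_sq_push _ hψ
  have hIp : ∀ p : K, Summable fun x : K ⧸ N => I (p⁻¹ • x) ^ 2 := fun p =>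
    (MulAction.toPerm p⁻¹ : Equiv.Perm (K ⧸ N)).summable_iff.mpr hI
  have hIp' : ∀ p : K, ∑' x : K ⧸ N, I (p⁻¹ • x) ^ 2 = ∑' x, I x ^ 2 := fun p =>
    (MulAction.toPerm p⁻¹ : Equiv.Perm (K ⧸ N)).tsum_eq fun x => I x ^ 2
  have hJ : ∀ x, push QuotientGroup.mk (conv a ψ) x = ∑ p ∈ A, a p * I (p⁻¹ • x) := fun x => by
    rw [push_conv_apply (fun _ _ => rfl) ha hψ,
      tsum_eq_sum fun p hp => by rw [haA p hp, zero_mul]]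
  have hCS : ∀ x, push QuotientGroup.mk (conv a ψ) x ^ 2
      ≤ (∑ p ∈ A, a p) * ∑ p ∈ A, a p * I (p⁻¹ • x) ^ 2 := fun x => by
    rw [hJ]
    refine Finset.sum_sq_le_sum_mul_sum_of_sq_le_mul A (fun p _ => ha0 p)
      (fun p _ => mul_nonneg (ha0 p) (sq_nonneg _)) fun p _ => le_of_eq (by ring)
  have hM : ∑' g, a g = ∑ p ∈ A, a p := tsum_eq_sum haA
  have hsq : ∑' x, push QuotientGroup.mk (conv a ψ) x ^ 2 ≤ (∑' g, a g) ^ 2 * ∑' x, I x ^ 2 :=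
    calc ∑' x, push QuotientGroup.mk (conv a ψ) x ^ 2
        ≤ ∑' x, (∑ p ∈ A, a p) * ∑ p ∈ A, a p * I (p⁻¹ • x) ^ 2 :=
          Summable.tsum_le_tsum hCS (summable_sq_push _ (finite_support_conv ha hψ))
            ((summable_sum fun p _ => (hIp p).mul_left _).mul_left _)
      _ = (∑ p ∈ A, a p) * ∑ p ∈ A, a p * ∑' x, I (p⁻¹ • x) ^ 2 := by
          rw [tsum_mul_left, Summable.tsum_finsetSum fun p _ => (hIp p).mul_left _]
          simp only [tsum_mul_left]
      _ = (∑' g, a g) ^ 2 * ∑' x, I x ^ 2 := by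
          simp only [hIp', ← Finset.sum_mul, hM]
          ring
  rw [norm21_ofReal N (conv_nonneg ha0 hψ0), norm21_ofReal N hψ0, fiberSum_eq_push,
    ← Real.sqrt_sq (tsum_nonneg ha0), ← Real.sqrt_mul (sq_nonneg _)]
  exact Real.sqrt_le_sqrt hsq

lemma le_hNorm {f : K → ℂ} (hf : (support f).Finite) {φ : K → ℝ} (hφ : (support φ).Finite)
    (hφ0 : ∀ g, 0 ≤ φ g) (hφ1 : norm21 N (fun g => (φ g : ℂ)) ≤ 1) :
    norm21 N (convC f fun g => (φ g : ℂ)) ≤ hNorm N f := by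
  have hnf : (support fun g => ‖f g‖).Finite := by rwa [support_norm_comp]
  -- `sSup` of an unbounded set of reals is `0`; Young's inequality bounds the set by `‖f‖₁`.
  refine le_csSup ⟨∑' g, ‖f g‖, ?_⟩ ⟨φ, hφ, hφ0, hφ1, rfl⟩
  rintro _ ⟨φ', hφ', hφ'0, hφ'1, rfl⟩
  calc norm21 N (convC f fun g => (φ' g : ℂ))
      ≤ norm21 N (fun g => (conv (fun y => ‖f y‖) φ' g : ℂ)) := by
        refine norm21_mono N (fun g => ?_)
          (by rw [support_ofReal_comp]; exact finite_support_conv hnf hφ')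
        rw [Complex.norm_of_nonneg (conv_nonneg (fun _ => norm_nonneg _) hφ'0 g)]
        exact norm_convC_le hf hφ'0 g
    _ ≤ (∑' g, ‖f g‖) * norm21 N (fun g => (φ' g : ℂ)) :=
        norm21_conv_le N (fun _ => norm_nonneg _) hnf hφ'0 hφ'
    _ ≤ ∑' g, ‖f g‖ := mul_le_of_le_one_right (tsum_nonneg fun _ => norm_nonneg _) hφ'1

end MixedNorm

section Comap

variable {G Q : Type*} [Group G] [Group Q] {π : G →* Q} (L : Subgroup Q)

lemma mk_eq_mk_comap_iff (g g' : G) :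
    (g : G ⧸ L.comap π) = g' ↔ (π g : Q ⧸ L) = π g' := by
  simp [QuotientGroup.eq]

def quotientComapEquiv (hπ : Surjective π) : G ⧸ L.comap π ≃ Q ⧸ L :=
  Equiv.ofBijective
    (Quotient.map' π fun a b h => by simpa [QuotientGroup.leftRel_apply] using h)
    ⟨fun x y => Quotient.inductionOn₂' x y fun a b h => (mk_eq_mk_comap_iff L a b).mpr h,
      fun y => Quotient.inductionOn' y fun q =>
        let ⟨g, hg⟩ := hπ q
        ⟨g, congrArg QuotientGroup.mk hg⟩⟩

lemma fiberSum_comap (hπ : Surjective π) {u : G → ℝ} (hu : (support u).Finite)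
    (x : G ⧸ L.comap π) :
    fiberSum (L.comap π) u x = fiberSum L (push π u) (quotientComapEquiv L hπ x) := by
  rw [fiberSum_eq_push, fiberSum_eq_push, ← push_comp _ _ hu]
  exact push_congr (fun g : G =>
    ((quotientComapEquiv L hπ).apply_eq_iff_eq (x := (g : G ⧸ L.comap π))).symm) u

lemma norm21_comap (hπ : Surjective π) {f : G → ℂ} (hf : (support f).Finite) :
    norm21 (L.comap π) f = norm21 L (fun q => (push π (fun g => ‖f g‖) q : ℂ)) := by
  have hnf : (support fun g => ‖f g‖).Finite := by rwa [support_norm_comp]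
  rw [norm21_eq, norm21_ofReal L (push_nonneg π fun _ => norm_nonneg _),
    ← (quotientComapEquiv L hπ).tsum_eq]
  simp only [fiberSum_comap L hπ hnf]

lemma norm21_comap_ofReal (hπ : Surjective π) {u : G → ℝ} (hu0 : ∀ g, 0 ≤ u g)
    (hu : (support u).Finite) :
    norm21 (L.comap π) (fun g => (u g : ℂ)) = norm21 L (fun q => (push π u q : ℂ)) := by
  rw [norm21_comap L hπ (by rwa [support_ofReal_comp])]
  simp only [Complex.norm_of_nonneg (hu0 _)]

lemma norm21_push_mul_le (hπ : Surjective π) {wQ : Q → ℝ} {wG : G → ℝ} (hwQ : ∀ q, 0 ≤ wQ q)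
    (hw : ∀ g, wQ (π g) ≤ wG g) {f : G → ℂ} (hf : (support f).Finite) :
    norm21 L (fun q => (push π (fun g => ‖f g‖) q : ℂ) * (wQ q : ℂ))
      ≤ norm21 (L.comap π) (fun g => f g * (wG g : ℂ)) := by
  have hnf : (support fun g => ‖f g‖).Finite := by rwa [support_norm_comp]
  have hfw : (support fun g => f g * (wG g : ℂ)).Finite :=
    hf.subset (support_mul_subset_left _ _)
  rw [norm21_comap L hπ hfw]
  refine norm21_mono L (fun q => ?_) (by
    rw [support_ofReal_comp]
    exact finite_support_push (by rwa [support_norm_comp]))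
  rw [norm_mul, Complex.norm_of_nonneg (push_nonneg π (fun _ => norm_nonneg _) q),
    Complex.norm_of_nonneg (hwQ q), ← push_mul_comp,
    Complex.norm_of_nonneg (push_nonneg π (fun _ => norm_nonneg _) q)]
  refine push_le_push (fun g => ?_) (hnf.subset (support_mul_subset_left _ _))
    (by rwa [support_norm_comp]) q
  rw [norm_mul, Complex.norm_of_nonneg ((hwQ (π g)).trans (hw g))]
  exact mul_le_mul_of_nonneg_left (hw g) (norm_nonneg _)

lemma hNorm_comap_le (hπ : Surjective π) {C : ℝ} (hC : 0 ≤ C) {wQ : Q → ℝ} {wG : G → ℝ}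
    (hwQ : ∀ q, 0 ≤ wQ q) (hw : ∀ g, wQ (π g) ≤ wG g)
    (hQ : ∀ F : Q → ℂ, (support F).Finite → hNorm L F ≤ C * norm21 L (fun q => F q * (wQ q : ℂ)))
    {f : G → ℂ} (hf : (support f).Finite) :
    hNorm (L.comap π) f ≤ C * norm21 (L.comap π) (fun g => f g * (wG g : ℂ)) := by
  set A := fun g => ‖f g‖
  have hA0 : ∀ g, 0 ≤ A g := fun g => norm_nonneg _
  have hA : (support A).Finite := by rwa [support_norm_comp]
  have hF : (support fun q => (push π A q : ℂ)).Finite := by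
    rw [support_ofReal_comp]; exact finite_support_push hA
  refine Real.sSup_le ?_ (mul_nonneg hC (Real.sqrt_nonneg _))
  rintro _ ⟨φ, hφ, hφ0, hφ1, rfl⟩
  have hψ1 : norm21 L (fun q => (push π φ q : ℂ)) ≤ 1 := by
    rwa [← norm21_comap_ofReal L hπ hφ0 hφ]
  calc norm21 (L.comap π) (convC f fun g => (φ g : ℂ))
      ≤ norm21 (L.comap π) (fun g => (conv A φ g : ℂ)) := by
        refine norm21_mono _ (fun g => ?_) (by
          rw [support_ofReal_comp]; exact finite_support_conv hA hφ)
        rw [Complex.norm_of_nonneg (conv_nonneg hA0 hφ0 g)]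
        exact norm_convC_le hf hφ0 g
    _ = norm21 L (convC (fun q => (push π A q : ℂ)) fun q => (push π φ q : ℂ)) := by
        rw [norm21_comap_ofReal L hπ (conv_nonneg hA0 hφ0) (finite_support_conv hA hφ),
          push_conv π hA hφ, convC_ofReal]
    _ ≤ hNorm L (fun q => (push π A q : ℂ)) :=
        le_hNorm L hF (finite_support_push hφ) (push_nonneg π hφ0) hψ1
    _ ≤ C * norm21 L (fun q => (push π A q : ℂ) * (wQ q : ℂ)) := hQ _ hF
    _ ≤ C * norm21 (L.comap π) (fun g => f g * (wG g : ℂ)) :=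
        mul_le_mul_of_nonneg_left (norm21_push_mul_le L hπ hwQ hw hf) hC

end Comap

section WordLength

variable {G Q : Type*} [Group G] [Group Q] {S : Set G}

lemma mclosure_eq_top_of_inv_mem (hsym : ∀ s ∈ S, s⁻¹ ∈ S) (hgen : Subgroup.closure S = ⊤) :
    Submonoid.closure S = ⊤ := by
  have hS : S ∪ S⁻¹ = S := Set.union_eq_left.mpr fun s hs => by simpa using hsym _ hs
  rw [← hS, ← Subgroup.closure_toSubmonoid, hgen, Subgroup.top_toSubmonoid]

lemma wordLength_prod_le {l : List G} (hl : ∀ s ∈ l, s ∈ S) : wordLength S l.prod ≤ l.length :=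
  Nat.sInf_le ⟨l, hl, rfl, rfl⟩

lemma exists_list_length_eq_wordLength (hS : Submonoid.closure S = ⊤) (g : G) :
    ∃ l : List G, (∀ s ∈ l, s ∈ S) ∧ l.length = wordLength S g ∧ l.prod = g := by
  obtain ⟨l, hl, hprod⟩ := Submonoid.exists_list_of_mem_closure (hS ▸ Submonoid.mem_top g)
  exact Nat.sInf_mem (s := {n | ∃ l : List G, (∀ s ∈ l, s ∈ S) ∧ l.length = n ∧ l.prod = g})
    ⟨l.length, l, hl, rfl, hprod⟩

lemma wordLength_map_le (hS : Submonoid.closure S = ⊤) (π : G →* Q) (g : G) :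
    wordLength (π '' S) (π g) ≤ wordLength S g := by
  obtain ⟨l, hl, hlen, rfl⟩ := exists_list_length_eq_wordLength hS g
  rw [← hlen, ← List.length_map (f := π), map_list_prod]
  exact wordLength_prod_le fun s hs => by
    obtain ⟨t, ht, rfl⟩ := List.mem_map.mp hs
    exact Set.mem_image_of_mem π (hl t ht)

lemma exists_list_map_eq (π : G →* Q) {l : List Q} (hl : ∀ s ∈ l, s ∈ π '' S) :
    ∃ l' : List G, (∀ s ∈ l', s ∈ S) ∧ l'.map π = l := by
  induction l with
  | nil => exact ⟨[], by simp, rfl⟩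
  | cons s l ih =>
    obtain ⟨⟨g, hg, rfl⟩, hrest⟩ := List.forall_mem_cons.mp hl
    obtain ⟨l', hl', rfl⟩ := ih hrest
    exact ⟨g :: l', List.forall_mem_cons.mpr ⟨hg, hl'⟩, rfl⟩

/-- Words in `π(S)` lift letter by letter to words in `S` of the same length. -/
lemma image_setOf_wordLength_le (hS : Submonoid.closure S = ⊤) {π : G →* Q} (hπ : Surjective π)
    (t : ℕ) : π '' {g | wordLength S g ≤ t} = {q | wordLength (π '' S) q ≤ t} := by
  refine Set.Subset.antisymm ?_ fun q hq => ?_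
  · rintro _ ⟨g, hg, rfl⟩
    exact (wordLength_map_le hS π g).trans hg
  have hSQ : Submonoid.closure (π '' S) = ⊤ := by
    rw [← MonoidHom.map_mclosure, hS, ← MonoidHom.mrange_eq_map,
      MonoidHom.mrange_eq_top_of_surjective π hπ]
  obtain ⟨l, hl, hlen, rfl⟩ := exists_list_length_eq_wordLength hSQ q
  obtain ⟨l', hl', rfl⟩ := exists_list_map_eq π hl
  refine ⟨l'.prod, ?_, map_list_prod π l'⟩
  calc wordLength S l'.prod ≤ l'.length := wordLength_prod_le hl'
    _ = wordLength (π '' S) (l'.map π).prod := by rw [← hlen, List.length_map]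
    _ ≤ t := hq

lemma radialMaj_comp (hS : Submonoid.closure S = ⊤) {π : G →* Q} (hπ : Surjective π)
    (w : Q → ℝ) : radialMaj (wordLength S) (w ∘ π) = radialMaj (wordLength (π '' S)) w := by
  funext t
  rw [radialMaj, radialMaj, Set.image_comp, image_setOf_wordLength_le hS hπ]

end WordLength

end PaperRD

theorem statement15_general {G Q : Type*} [Group G] [Group Q]
    (π : G →* Q) (hπ : Function.Surjective π)
    (S : Finset G) (hSsym : ∀ s ∈ S, s⁻¹ ∈ S)
    (hSgen : Subgroup.closure (S : Set G) = ⊤)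
    (L : Subgroup Q) :
    (PaperRD.HasPairRD L (PaperRD.wordLength (π '' (S : Set G))) →
      PaperRD.HasPairRD (L.comap π) (PaperRD.wordLength (S : Set G))) ∧
    (PaperRD.SLCsubexp L (PaperRD.wordLength (π '' (S : Set G))) →
      PaperRD.SLCsubexp (L.comap π) (PaperRD.wordLength (S : Set G))) := by
  have hS := PaperRD.mclosure_eq_top_of_inv_mem hSsym hSgen
  constructor
  · rintro ⟨s, hs, C, hC, hQ⟩
    refine ⟨s, hs, C, hC, fun f hf => PaperRD.hNorm_comap_le L hπ hC.le (fun q => by positivity)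
      (fun g => ?_) hQ hf⟩
    gcongr
    exact PaperRD.wordLength_map_le hS π g
  · rintro ⟨C, hC, w, hw1, hQ, hW⟩
    refine ⟨C, hC, w ∘ π, fun g => hw1 (π g), fun f hf => PaperRD.hNorm_comap_le L hπ hC.le
      (fun q => zero_le_one.trans (hw1 q)) (fun g => le_rfl) hQ hf, ?_⟩
    rwa [PaperRD.radialMaj_comp hS hπ]

/-- Let `π : G → Q` be a surjective homomorphism, `G` generated by a
finite symmetric set `S` with word length `ℓ_G`, `Q` equipped with the generating set
`π(S)` and its word length `ℓ_Q`. Let `L ≤ Q` and `H = π⁻¹(L)`. If `(Q,L)` has pair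
rapid decay then `(G,H)` has pair rapid decay, and if `(Q,L) ∈ SLC_subexp` then
`(G,H) ∈ SLC_subexp`. -/
theorem statement15 {G Q : Type*} [Group G] [Group Q] [Countable G] [Countable Q]
    (π : G →* Q) (hπ : Function.Surjective π)
    (S : Finset G) (hSsym : ∀ s ∈ S, s⁻¹ ∈ S)
    (hSgen : Subgroup.closure (S : Set G) = ⊤)
    (L : Subgroup Q) :
    (PaperRD.HasPairRD L (PaperRD.wordLength (π '' (S : Set G))) →
      PaperRD.HasPairRD (L.comap π) (PaperRD.wordLength (S : Set G))) ∧
    (PaperRD.SLCsubexp L (PaperRD.wordLength (π '' (S : Set G))) →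
      PaperRD.SLCsubexp (L.comap π) (PaperRD.wordLength (S : Set G))) :=
  statement15_general π hπ S hSsym hSgen L
end
end

section
/- Let M ≤ SL_2(ℤ) be a subgroup all of whose elements are unipotent matrices (i.e. (m − I)² = 0, equivalently every element has trace 2 and determinant 1). Then there exists h ∈ SL_2(ℤ) such that hMh⁻¹ is contained in the group of upper unitriangular matrices {(1 a; 0 1) : a ∈ ℤ}. -/
/-!
Write a unipotent `m` as `1 + N` with `N ^ 2 = 0`. If `m`, `m'` and `m * m'` are all unipotent,
the traces give `tr (N * N') = 0`, and for square-zero `2 × 2` matrices this forces `N * N' = 0`.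
So every `N` kills the columns of one fixed nonzero `N₀`, and the elements of `M` share a fixed
primitive vector `v ∈ ℤ²`. Conjugating by an element of `SL(2, ℤ)` with first column `v` makes
every element of `M` fix `e₀`, i.e. upper unitriangular.
-/

open Matrix
open scoped MatrixGroups

namespace Matrix

variable {R : Type*} [CommRing R] [IsReduced R]

theorem trace_eq_zero_of_sq_eq_zero {n : Type*} [Fintype n] [DecidableEq n]
    {N : Matrix n n R} (hN : N ^ 2 = 0) : N.trace = 0 :=
  (isNilpotent_trace_of_isNilpotent ⟨2, hN⟩).eq_zero

theorem mul_eq_zero_of_sq_eq_zero_of_trace_mul_eq_zero {N N' : Matrix (Fin 2) (Fin 2) R}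
    (hN : N ^ 2 = 0) (hN' : N' ^ 2 = 0) (htr : (N * N').trace = 0) : N * N' = 0 := by
  have ht := trace_eq_zero_of_sq_eq_zero hN
  have ht' := trace_eq_zero_of_sq_eq_zero hN'
  obtain ⟨a, b, c, d, rfl⟩ : ∃ a b c d, N = !![a, b; c, d] := ⟨_, _, _, _, N.eta_fin_two⟩
  obtain ⟨a', b', c', d', rfl⟩ : ∃ a b c d, N' = !![a, b; c, d] :=
    ⟨_, _, _, _, N'.eta_fin_two⟩
  rw [trace_fin_two_of] at ht ht'
  obtain rfl := eq_neg_of_add_eq_zero_right ht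
  obtain rfl := eq_neg_of_add_eq_zero_right ht'
  have e := congrFun₂ hN 0 0
  have e' := congrFun₂ hN' 0 0
  simp only [sq, mul_fin_two, trace_fin_two_of, of_apply, cons_val', cons_val_zero, empty_val',
    cons_val_fin_one, zero_apply] at e e' htr
  -- Each entry of `N * N'` squares to a combination of `e`, `e'` and `htr`.
  have h00 : a * a' + b * c' = 0 := eq_zero_of_pow_eq_zero (n := 2) <| by
    linear_combination a' ^ 2 * e - b * c * e' + b * c' * htr
  have h01 : a * b' + b * -a' = 0 := eq_zero_of_pow_eq_zero (n := 2) <| by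
    linear_combination b' ^ 2 * e + b ^ 2 * e' - b * b' * htr
  have h10 : c * a' + -a * c' = 0 := eq_zero_of_pow_eq_zero (n := 2) <| by
    linear_combination c' ^ 2 * e + c ^ 2 * e' - c * c' * htr
  have h11 : c * b' + -a * -a' = 0 := eq_zero_of_pow_eq_zero (n := 2) <| by
    linear_combination a' ^ 2 * e - b * c * e' + c * b' * htr
  rw [mul_fin_two, h00, h01, h10, h11]
  exact (eta_fin_two 0).symm

theorem sub_one_mul_sub_one_eq_zero {m m' : Matrix (Fin 2) (Fin 2) R}
    (hm : (m - 1) ^ 2 = 0) (hm' : (m' - 1) ^ 2 = 0) (hmm' : (m * m' - 1) ^ 2 = 0) :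
    (m - 1) * (m' - 1) = 0 := by
  refine mul_eq_zero_of_sq_eq_zero_of_trace_mul_eq_zero hm hm' ?_
  have htr := trace_eq_zero_of_sq_eq_zero hmm'
  rwa [show m * m' - 1 = (m - 1) + (m' - 1) + (m - 1) * (m' - 1) by noncomm_ring, trace_add,
    trace_add, trace_eq_zero_of_sq_eq_zero hm, trace_eq_zero_of_sq_eq_zero hm', zero_add,
    zero_add] at htr

end Matrix

namespace Matrix.SpecialLinearGroup

variable {R : Type*} [CommRing R]

theorem exists_mulVec_single_eq {v : Fin 2 → R} (hv : IsCoprime (v 0) (v 1)) :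
    ∃ g : SL(2, R), (g : Matrix (Fin 2) (Fin 2) R) *ᵥ Pi.single 0 1 = v := by
  obtain ⟨u, s, huv⟩ := hv
  refine ⟨⟨!![v 0, -s; v 1, u], by rw [det_fin_two_of]; linear_combination huv⟩, ?_⟩
  ext i
  fin_cases i <;> simp

theorem exists_coe_eq_of_mulVec_single_eq (x : SL(2, R))
    (hx : (x : Matrix (Fin 2) (Fin 2) R) *ᵥ Pi.single 0 1 = Pi.single 0 1) :
    ∃ a : R, (x : Matrix (Fin 2) (Fin 2) R) = !![1, a; 0, 1] := by
  -- Each entry of `N * N'` squares to a combination of `e`, `e'` and `htr`.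
  have h00 : x 0 0 = 1 := by simpa using congrFun hx 0
  have h10 : x 1 0 = 0 := by simpa using congrFun hx 1
  have h11 : x 1 1 = 1 := by
    have hdet := x.det_coe
    rwa [det_fin_two, h00, h10, one_mul, mul_zero, sub_zero] at hdet
  refine ⟨x 0 1, ?_⟩
  conv_lhs => rw [eta_fin_two (x : Matrix (Fin 2) (Fin 2) R)]
  rw [h00, h10, h11]

theorem mulVec_conj_eq_of_mulVec_eq {n : Type*} [Fintype n] [DecidableEq n]
    {g m : SpecialLinearGroup n R} {e v : n → R} (hg : (g : Matrix n n R) *ᵥ e = v)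
    (hm : (m : Matrix n n R) *ᵥ v = v) :
    ((g⁻¹ * m * g : SpecialLinearGroup n R) : Matrix n n R) *ᵥ e = e := by
  rw [coe_mul, coe_mul, ← mulVec_mulVec, ← mulVec_mulVec, hg, hm, ← hg, mulVec_mulVec, ← coe_mul,
    inv_mul_cancel, coe_one, one_mulVec]

end Matrix.SpecialLinearGroup

theorem Int.exists_smul_eq_isCoprime {w : Fin 2 → ℤ} (hw : w ≠ 0) :
    ∃ g : ℤ, g ≠ 0 ∧ ∃ v : Fin 2 → ℤ, IsCoprime (v 0) (v 1) ∧ w = g • v := by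
  have hpos : 0 < Int.gcd (w 0) (w 1) := by
    refine Int.gcd_pos_iff.2 (not_and_or.1 fun h => hw ?_)
    ext i
    fin_cases i <;> simp [h.1, h.2]
  obtain ⟨g, p, q, hg, hpq, hp, hq⟩ := Int.exists_gcd_one' hpos
  refine ⟨g, by exact_mod_cast hg.ne', ![p, q], Int.isCoprime_iff_gcd_eq_one.2 hpq, ?_⟩
  ext i
  fin_cases i <;> simp [hp, hq, mul_comm]

theorem exists_isCoprime_forall_mulVec_eq (M : Subgroup (SL(2, ℤ)))
    (huni : ∀ m ∈ M, ((m : Matrix (Fin 2) (Fin 2) ℤ) - 1) ^ 2 = 0) :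
    ∃ v : Fin 2 → ℤ, IsCoprime (v 0) (v 1) ∧
      ∀ m ∈ M, (m : Matrix (Fin 2) (Fin 2) ℤ) *ᵥ v = v := by
  by_cases htriv : ∀ m ∈ M, (m : Matrix (Fin 2) (Fin 2) ℤ) = 1
  · exact ⟨Pi.single 0 1, by simp [isCoprime_one_left], fun m hm => by
      rw [htriv m hm, one_mulVec]⟩
  push Not at htriv
  obtain ⟨m₀, hm₀, hne⟩ := htriv
  obtain ⟨j, hj⟩ : ∃ j, (m₀ - 1 : Matrix (Fin 2) (Fin 2) ℤ).col j ≠ 0 := by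
    by_contra! h
    exact sub_ne_zero.2 hne (ext fun i j => congrFun (h j) i)
  obtain ⟨g, hg, v, hv, hw⟩ := Int.exists_smul_eq_isCoprime hj
  refine ⟨v, hv, fun m hm => ?_⟩
  have hker : ((m : Matrix (Fin 2) (Fin 2) ℤ) - 1) * (m₀ - 1) = 0 :=
    sub_one_mul_sub_one_eq_zero (huni m hm) (huni m₀ hm₀)
      (by simpa using huni _ (mul_mem hm hm₀))
  have hgv : g • (((m : Matrix (Fin 2) (Fin 2) ℤ) - 1) *ᵥ v) = 0 := by
    rw [← mulVec_smul, ← hw, ← mulVec_single_one, mulVec_mulVec, hker, zero_mulVec]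
  have hmv := (smul_eq_zero.1 hgv).resolve_left hg
  rwa [sub_mulVec, one_mulVec, sub_eq_zero] at hmv

/-- Let `M ≤ SL_2(ℤ)` be a subgroup all of whose elements are
unipotent (i.e. `(m - I)² = 0`). Then there exists `h ∈ SL_2(ℤ)` such that
`hMh⁻¹` is contained in the group of upper unitriangular matrices
`{(1 a; 0 1) : a ∈ ℤ}`. -/
theorem statement19 (M : Subgroup (Matrix.SpecialLinearGroup (Fin 2) ℤ))
    (huni : ∀ m ∈ M, ((m : Matrix (Fin 2) (Fin 2) ℤ) - 1) ^ 2 = 0) :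
    ∃ h : Matrix.SpecialLinearGroup (Fin 2) ℤ, ∀ m ∈ M, ∃ a : ℤ,
      ((h * m * h⁻¹ : Matrix.SpecialLinearGroup (Fin 2) ℤ) :
          Matrix (Fin 2) (Fin 2) ℤ) = !![1, a; 0, 1] := by
  obtain ⟨v, hv, hfix⟩ := exists_isCoprime_forall_mulVec_eq M huni
  obtain ⟨g, hg⟩ := SpecialLinearGroup.exists_mulVec_single_eq hv
  refine ⟨g⁻¹, fun m hm => SpecialLinearGroup.exists_coe_eq_of_mulVec_single_eq _ ?_⟩
  rw [inv_inv]
  exact SpecialLinearGroup.mulVec_conj_eq_of_mulVec_eq hg (hfix m hm)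
end
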